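/- arXiv:math/0602222 — 3 statements merged into one kernel-verified Lean document; each statement's English description precedes it below -/
import Mathlib

section
/- Let G be a group with normal subgroups N ⊆ H, and let R = (G/N) × G × (G/H) with left K = (G/N) × G action (tN,s)·(rN,u,vH) = (trN,su,tvH) and right G-action (rN,u,vH)·y = (ryN,uy,vH). With P # Q as in the specific fibred-product construction (P = (G/N) × G × (G/N), Q = (G/N) × G, φ(K·(rN,u,vN)) = (v⁻¹rN,r⁻¹)·G), the map ψ([rN,u,vN,wN,z]) = (rzN, uz, vH) is a well-defined bijection from P # Q to R, with inverse ψ⁻¹(rN,u,vH) = [rN, u, vN, v⁻¹rN, e]. -/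
/-- the map `ψ([rN,u,vN,wN,z]) = (rzN, uz, vH)` is a well-defined bijection
from `P # Q` (the quotient of `{(rN,u,vN,wN,z) : wN = v⁻¹rzN}` by the diagonal
`L = (H/N) × G` action) onto `R = (G/N) × G × (G/H)`, with inverse
`ψ⁻¹(rN,u,vH) = [rN, u, vN, v⁻¹rN, e]`.  Everything is expressed at the level of
representatives: constancy on `L`-orbits, injectivity modulo `L`-orbits, surjectivity,
and the inverse formula. -/
theorem psi_bijection {G : Type*} [Group G] (N H : Subgroup G)
    [N.Normal] [H.Normal] (hNH : N ≤ H)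
    (projH : G ⧸ N → G ⧸ H) (hproj : ∀ g : G, projH (g : G ⧸ N) = (g : G ⧸ H))
    (ψrep : (G ⧸ N) → G → (G ⧸ N) → (G ⧸ N) → G → (G ⧸ N) × G × (G ⧸ H))
    (hψ : ∀ rq u vq wq z, ψrep rq u vq wq z = (rq * (z : G ⧸ N), u * z, projH vq)) :
    -- ψ is constant on L-orbits (well defined on P # Q)
    (∀ (rq : G ⧸ N) (u : G) (vq wq : G ⧸ N) (z : G) (hq : G ⧸ N),
        hq ∈ Subgroup.map (QuotientGroup.mk' N) H → ∀ y : G,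
        ψrep (rq * (y : G ⧸ N)) (u * y) (vq * hq) (hq⁻¹ * wq) (y⁻¹ * z)
          = ψrep rq u vq wq z)
    -- ψ is injective modulo L-orbits
    ∧ (∀ (rq : G ⧸ N) (u : G) (vq wq : G ⧸ N) (z : G)
         (rq' : G ⧸ N) (u' : G) (vq' wq' : G ⧸ N) (z' : G),
        wq = vq⁻¹ * rq * (z : G ⧸ N) → wq' = vq'⁻¹ * rq' * (z' : G ⧸ N) →
        ψrep rq u vq wq z = ψrep rq' u' vq' wq' z' →
        ∃ hq : G ⧸ N, hq ∈ Subgroup.map (QuotientGroup.mk' N) H ∧ ∃ y : G,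
          rq * (y : G ⧸ N) = rq' ∧ u * y = u' ∧ vq * hq = vq' ∧
          hq⁻¹ * wq = wq' ∧ y⁻¹ * z = z')
    -- ψ is surjective
    ∧ (∀ ρ : (G ⧸ N) × G × (G ⧸ H),
        ∃ (rq : G ⧸ N) (u : G) (vq wq : G ⧸ N) (z : G),
          wq = vq⁻¹ * rq * (z : G ⧸ N) ∧ ψrep rq u vq wq z = ρ)
    -- the inverse formula ψ⁻¹(rN,u,vH) = [rN, u, vN, v⁻¹rN, e]
    ∧ (∀ r u v : G,
        ((v⁻¹ * r : G) : G ⧸ N) = ((v : G) : G ⧸ N)⁻¹ * (r : G ⧸ N) * ((1 : G) : G ⧸ N) ∧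
        ψrep (r : G ⧸ N) u (v : G ⧸ N) ((v⁻¹ * r : G) : G ⧸ N) 1
          = ((r : G ⧸ N), u, (v : G ⧸ H))) := by
  refine ⟨?_, ?_, ?_, ?_⟩
  · rintro rq u vq wq z hq hmem y
    obtain ⟨h, hh, rfl⟩ := hmem
    induction vq using QuotientGroup.induction_on with
    | _ v =>
    rw [hψ, hψ]
    have h1 : (rq * (y : G ⧸ N)) * ((y⁻¹ * z : G) : G ⧸ N) = rq * (z : G ⧸ N) := by
      rw [QuotientGroup.mk_mul, QuotientGroup.mk_inv]
      group
    have h2 : u * y * (y⁻¹ * z) = u * z := by group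
    have h3 : projH ((v : G ⧸ N) * (QuotientGroup.mk' N) h) = projH (v : G ⧸ N) := by
      show projH ((v : G ⧸ N) * (h : G ⧸ N)) = _
      rw [← QuotientGroup.mk_mul, hproj, hproj]
      exact (QuotientGroup.eq).2 (by simpa using H.inv_mem hh)
    rw [h1, h2, h3]
  · rintro rq u vq wq z rq' u' vq' wq' z' hw hw' heq
    rw [hψ, hψ] at heq
    obtain ⟨e1, e2, e3⟩ : rq * (z : G ⧸ N) = rq' * (z' : G ⧸ N) ∧ u * z = u' * z'
        ∧ projH vq = projH vq' := by simpa [Prod.ext_iff] using heq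
    induction vq using QuotientGroup.induction_on with
    | _ v =>
    induction vq' using QuotientGroup.induction_on with
    | _ v' =>
    have hvH : (v : G ⧸ H) = (v' : G ⧸ H) := by rw [← hproj, ← hproj]; exact e3
    have hH : v⁻¹ * v' ∈ H := (QuotientGroup.eq).1 hvH
    refine ⟨((v⁻¹ * v' : G) : G ⧸ N), ⟨v⁻¹ * v', hH, rfl⟩, z * z'⁻¹, ?_, ?_, ?_, ?_, ?_⟩
    · rw [QuotientGroup.mk_mul, QuotientGroup.mk_inv, ← mul_assoc, e1]
      group
    · have : u' = u * z * z'⁻¹ := by rw [e2]; group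
      rw [this]; group
    · rw [← QuotientGroup.mk_mul]; congr 1; group
    · rw [hw, hw', QuotientGroup.mk_mul, QuotientGroup.mk_inv]
      have h4 : ((v' : G) : G ⧸ N)⁻¹ * rq' * (z' : G ⧸ N)
          = ((v' : G) : G ⧸ N)⁻¹ * (rq * (z : G ⧸ N)) := by rw [mul_assoc, e1]
      rw [h4]; group
    · group
  · rintro ⟨ρ1, ρ2, ρ3⟩
    obtain ⟨v, rfl⟩ := QuotientGroup.mk_surjective ρ3
    refine ⟨ρ1, ρ2, (v : G ⧸ N), (v : G ⧸ N)⁻¹ * ρ1 * ((1:G) : G ⧸ N), 1, rfl, ?_⟩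
    rw [hψ, hproj]
    simp
  · intro r u v
    constructor
    · simp [QuotientGroup.mk_mul, QuotientGroup.mk_inv]
    · rw [hψ, hproj]
      simp
end

section
/- Let G be a group with normal subgroups N ⊆ H. The bijection ψ : P # Q → R, ψ([rN,u,vN,wN,z]) = (rzN,uz,vH), is equivariant for the left K = (G/N) × G actions and the right G-actions: ψ((tN,s)·x) = (tN,s)·ψ(x) and ψ(x·y) = ψ(x)·y for all x ∈ P # Q, (tN,s) ∈ K, y ∈ G. -/
/-- the bijection `ψ : P # Q → R`, `ψ([rN,u,vN,wN,z]) = (rzN,uz,vH)`, is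
equivariant for the left `K = (G/N) × G` actions (`k·[p,q] = [k·p,q]` on `P # Q`,
`(tN,s)·(rN,u,vH) = (trN,su,tvH)` on `R`) and for the right `G`-actions
(`[p,q]·m = [p,q·m]` on `P # Q`, `(rN,u,vH)·y = (ryN,uy,vH)` on `R`), expressed at
the level of representatives of `P # Q`. -/
theorem psi_equivariant {G : Type*} [Group G] (N H : Subgroup G)
    [N.Normal] [H.Normal] (hNH : N ≤ H)
    (projH : G ⧸ N → G ⧸ H) (hproj : ∀ g : G, projH (g : G ⧸ N) = (g : G ⧸ H))
    (ψrep : (G ⧸ N) → G → (G ⧸ N) → (G ⧸ N) → G → (G ⧸ N) × G × (G ⧸ H))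
    (hψ : ∀ rq u vq wq z, ψrep rq u vq wq z = (rq * (z : G ⧸ N), u * z, projH vq)) :
    ∀ (rq : G ⧸ N) (u : G) (vq wq : G ⧸ N) (z : G),
      wq = vq⁻¹ * rq * (z : G ⧸ N) →
      -- K-equivariance
      (∀ (tq : G ⧸ N) (s : G),
        ψrep (tq * rq) (s * u) (tq * vq) wq z
          = (tq * (ψrep rq u vq wq z).1, s * (ψrep rq u vq wq z).2.1,
             projH tq * (ψrep rq u vq wq z).2.2))
      -- G-equivariance
      ∧ (∀ y : G,
        ψrep rq u vq (wq * (y : G ⧸ N)) (z * y)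
          = ((ψrep rq u vq wq z).1 * (y : G ⧸ N), (ψrep rq u vq wq z).2.1 * y,
             (ψrep rq u vq wq z).2.2)) := by
  intro rq u vq wq z _
  constructor
  · intro tq s
    simp only [hψ]
    refine Prod.ext ?_ (Prod.ext ?_ ?_)
    · simp [mul_assoc]
    · simp [mul_assoc]
    · induction tq using QuotientGroup.induction_on with
      | H t =>
        induction vq using QuotientGroup.induction_on with
        | H v =>
          rw [← QuotientGroup.mk_mul, hproj, hproj, hproj, QuotientGroup.mk_mul]
  · intro y
    simp [hψ, mul_assoc]
end

section
/- Under the hypotheses of the symmetric-imprimitivity calculus (groups K, L, G₀; P with commuting left K- and right L-actions; Q with commuting left L- and right G₀-actions; L-equivariant bijection φ : K\P → Q/G₀; maps σ̃ : P → Aut A and τ̃ : Q → Aut A with σ̃_{k·p·t} = σ_k σ̃_p ζ_t, τ̃_{t·q·m} = η_t τ̃_q τ_m, and σ, ζ, σ̃ commuting with η, τ̃, τ), the map T defined by T(f)(q) = τ̃_q⁻¹(σ̃_p⁻¹(f(p))), where p is any element with φ(K·p) = q·G₀, is well defined: its value is independent of the choice of p in the K-orbit determined by q. -/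
/-- under the hypotheses of the symmetric-imprimitivity calculus, the map
`T(f)(q) = τ̃_q⁻¹(σ̃_p⁻¹(f(p)))`, where `p` is any element with `φ(K·p) = q·G₀`, is well
defined: its value is independent of the choice of `p`. -/
theorem T_well_defined {K L G₀ P Q A : Type*} [Group K] [Group L] [Group G₀]
    [MulAction K P]
    (pR : P → L → P) (hp1 : ∀ p, pR p 1 = p)
    (hpm : ∀ p (t t' : L), pR p (t * t') = pR (pR p t) t')
    (hcommP : ∀ (k : K) (p : P) (t : L), k • (pR p t) = pR (k • p) t)
    [MulAction L Q]
    (qR : Q → G₀ → Q) (hq1 : ∀ q, qR q 1 = q)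
    (hqm : ∀ q (m m' : G₀), qR q (m * m') = qR (qR q m) m')
    (hcommQ : ∀ (t : L) (q : Q) (m : G₀), t • (qR q m) = qR (t • q) m)
    [NonUnitalNormedRing A] [StarRing A] [CStarRing A] [NormedSpace ℂ A]
    [IsScalarTower ℂ A A] [SMulCommClass ℂ A A] [StarModule ℂ A] [CompleteSpace A]
    (σ : K → A ≃⋆ₐ[ℂ] A) (hσ1 : ∀ a, σ 1 a = a)
    (hσm : ∀ (k k' : K) (a : A), σ (k * k') a = σ k (σ k' a))
    (η : L → A ≃⋆ₐ[ℂ] A) (hη1 : ∀ a, η 1 a = a)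
    (hηm : ∀ (t t' : L) (a : A), η (t * t') a = η t (η t' a))
    (ζ : L → A ≃⋆ₐ[ℂ] A) (hζ1 : ∀ a, ζ 1 a = a)
    (hζm : ∀ (t t' : L) (a : A), ζ (t * t') a = ζ t (ζ t' a))
    (τ : G₀ → A ≃⋆ₐ[ℂ] A) (hτ1 : ∀ a, τ 1 a = a)
    (hτm : ∀ (m m' : G₀) (a : A), τ (m * m') a = τ m (τ m' a))
    (σt : P → A ≃⋆ₐ[ℂ] A) (τt : Q → A ≃⋆ₐ[ℂ] A)
    (hσcoc : ∀ (k : K) (p : P) (t : L) (a : A), σt (pR (k • p) t) a = σ k (σt p (ζ t a)))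
    (hτcoc : ∀ (t : L) (q : Q) (m : G₀) (a : A), τt (qR (t • q) m) a = η t (τt q (τ m a)))
    -- σ, ζ, σ̃ commute with η, τ̃, τ
    (hc1 : ∀ (k : K) (t : L) (a : A), σ k (η t a) = η t (σ k a))
    (hc2 : ∀ (k : K) (q : Q) (a : A), σ k (τt q a) = τt q (σ k a))
    (hc3 : ∀ (k : K) (m : G₀) (a : A), σ k (τ m a) = τ m (σ k a))
    (hc4 : ∀ (t t' : L) (a : A), ζ t (η t' a) = η t' (ζ t a))
    (hc5 : ∀ (t : L) (q : Q) (a : A), ζ t (τt q a) = τt q (ζ t a))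
    (hc6 : ∀ (t : L) (m : G₀) (a : A), ζ t (τ m a) = τ m (ζ t a))
    (hc7 : ∀ (p : P) (t : L) (a : A), σt p (η t a) = η t (σt p a))
    (hc8 : ∀ (p : P) (q : Q) (a : A), σt p (τt q a) = τt q (σt p a))
    (hc9 : ∀ (p : P) (m : G₀) (a : A), σt p (τ m a) = τ m (σt p a))
    -- φ, at the level of representatives
    (φbar : P → Q)
    (hwd : ∀ (k : K) (p : P), ∃ m : G₀, qR (φbar (k • p)) m = φbar p)
    (hinj : ∀ p p' : P, (∃ m : G₀, qR (φbar p) m = φbar p') → ∃ k : K, k • p = p')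
    (hsurj : ∀ q : Q, ∃ (p : P) (m : G₀), qR (φbar p) m = q)
    (heqv : ∀ (p : P) (t : L), ∃ m : G₀, qR (φbar (pR p t)) m = t⁻¹ • (φbar p))
    (f : P → A) (hf : ∀ (k : K) (p : P), f (k • p) = σ k (f p)) :
    ∀ (q : Q) (p p' : P),
      (∃ m : G₀, qR (φbar p) m = q) → (∃ m : G₀, qR (φbar p') m = q) →
      (τt q).symm ((σt p).symm (f p)) = (τt q).symm ((σt p').symm (f p')) := by
  rintro q p p' ⟨m, hm⟩ ⟨m', hm'⟩
  have hσt : ∀ (k : K) (p : P) (a : A), σt (k • p) a = σ k (σt p a) := by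
    intro k p a
    have := hσcoc k p 1 a
    rwa [hp1, hζ1] at this
  obtain ⟨k, hk⟩ : ∃ k : K, k • p = p' := by
    apply hinj
    refine ⟨m * m'⁻¹, ?_⟩
    rw [hqm, hm, ← hm', ← hqm, mul_inv_cancel, hq1]
  congr 1
  subst hk
  rw [hf]
  have h : σt (k • p) ((σt p).symm (f p)) = σ k (f p) := by
    rw [hσt, StarAlgEquiv.apply_symm_apply]
  rw [← h, StarAlgEquiv.symm_apply_apply]
end
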